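/- If A satisfies RIP of order 4s with δ_{4s} < 1/3, ‖Ah‖₂ ≤ 2ε, and ‖h_{T_0^c}‖₁ ≤ ‖h_{T_0}‖₁ + 2σ, where T_0 is the set of the s largest-magnitude entries of h, then ‖h‖₂ ≤ C₁ ε + C₂ σ/√s for absolute constants C₁, C₂ > 0 depending only on δ_{4s} (one can take C₁ = 12.6 and C₂ = 3 when δ_{4s} < 1/3). -/

import Mathlib

open Finset Real

noncomputable def l2 {m : ℕ} (x : Fin m → ℝ) : ℝ := Real.sqrt (∑ i, x i ^ 2)

noncomputable def l1 {m : ℕ} (x : Fin m → ℝ) : ℝ := ∑ i, |x i|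

def IsSparse {m : ℕ} (s : ℕ) (x : Fin m → ℝ) : Prop :=
  (Finset.univ.filter fun i => x i ≠ 0).card ≤ s

namespace StmtAux

open Matrix

lemma sumsq_nonneg {m : ℕ} (x : Fin m → ℝ) : 0 ≤ ∑ i, x i ^ 2 :=
  Finset.sum_nonneg fun i _ => sq_nonneg _

lemma l2_nonneg {m : ℕ} (x : Fin m → ℝ) : 0 ≤ l2 x := Real.sqrt_nonneg _

lemma l2_sq {m : ℕ} (x : Fin m → ℝ) : l2 x ^ 2 = ∑ i, x i ^ 2 :=
  Real.sq_sqrt (sumsq_nonneg x)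

lemma l1_nonneg {m : ℕ} (x : Fin m → ℝ) : 0 ≤ l1 x :=
  Finset.sum_nonneg fun i _ => abs_nonneg _

lemma aux_le_of_sq {x y : ℝ} (hy : 0 ≤ y) (h : x ^ 2 ≤ y ^ 2) : x ≤ y := by
  calc x ≤ |x| := le_abs_self x
  _ = Real.sqrt (x ^ 2) := (Real.sqrt_sq_eq_abs x).symm
  _ ≤ Real.sqrt (y ^ 2) := Real.sqrt_le_sqrt h
  _ = y := Real.sqrt_sq hy

lemma l2_eq_zero {m : ℕ} {x : Fin m → ℝ} (h : l2 x = 0) : x = 0 := by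
  have h2 : ∑ i, x i ^ 2 = 0 := by
    have := l2_sq x
    rw [h] at this; simpa using this.symm
  funext i
  have := (Finset.sum_eq_zero_iff_of_nonneg (fun i _ => sq_nonneg (x i))).mp h2 i (mem_univ i)
  exact pow_eq_zero_iff two_ne_zero |>.mp this

lemma l2_smul {m : ℕ} (c : ℝ) (hc : 0 ≤ c) (x : Fin m → ℝ) :
    l2 (c • x) = c * l2 x := by
  unfold l2
  have : ∑ i, (c • x) i ^ 2 = c ^ 2 * ∑ i, x i ^ 2 := by
    rw [Finset.mul_sum]; apply Finset.sum_congr rfl; intro i _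
    simp [Pi.smul_apply, smul_eq_mul]; ring
  rw [this, Real.sqrt_mul (sq_nonneg c), Real.sqrt_sq hc]

/-- restriction of a vector to a set of coordinates -/
def rst {p : ℕ} (T : Finset (Fin p)) (x : Fin p → ℝ) : Fin p → ℝ :=
  fun i => if i ∈ T then x i else 0

lemma sum_sq_rst {p : ℕ} (T : Finset (Fin p)) (x : Fin p → ℝ) :
    ∑ i, rst T x i ^ 2 = ∑ i ∈ T, x i ^ 2 := by
  rw [show ∑ i, rst T x i ^ 2 = ∑ i : Fin p, (if i ∈ T then x i ^ 2 else 0) from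
    Finset.sum_congr rfl fun i _ => by unfold rst; split <;> simp]
  rw [Finset.sum_ite_mem, Finset.univ_inter]

lemma l1_rst {p : ℕ} (T : Finset (Fin p)) (x : Fin p → ℝ) :
    l1 (rst T x) = ∑ i ∈ T, |x i| := by
  unfold l1
  rw [show ∑ i, |rst T x i| = ∑ i : Fin p, (if i ∈ T then |x i| else 0) from
    Finset.sum_congr rfl fun i _ => by unfold rst; split <;> simp]
  rw [Finset.sum_ite_mem, Finset.univ_inter]

lemma rst_supp {p : ℕ} (T : Finset (Fin p)) (x : Fin p → ℝ) (i : Fin p) (h : rst T x i ≠ 0) :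
    i ∈ T := by
  by_contra hi; exact h (by simp [rst, hi])

/-- Cauchy-Schwarz for the dot product. -/
lemma dot_le_l2 {m : ℕ} (w z : Fin m → ℝ) : w ⬝ᵥ z ≤ l2 w * l2 z := by
  apply aux_le_of_sq (mul_nonneg (l2_nonneg w) (l2_nonneg z))
  rw [mul_pow, l2_sq, l2_sq]
  exact sum_mul_sq_le_sq_mul_sq univ w z

lemma l2_sq_add_disj {p : ℕ} {u v : Fin p → ℝ} (h : ∀ i, u i = 0 ∨ v i = 0) :
    l2 (u + v) ^ 2 = l2 u ^ 2 + l2 v ^ 2 := by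
  rw [l2_sq, l2_sq, l2_sq, ← Finset.sum_add_distrib]
  apply Finset.sum_congr rfl; intro i _
  rcases h i with h0 | h0 <;> simp [h0]

lemma l2_sq_sub_disj {p : ℕ} {u v : Fin p → ℝ} (h : ∀ i, u i = 0 ∨ v i = 0) :
    l2 (u - v) ^ 2 = l2 u ^ 2 + l2 v ^ 2 := by
  rw [l2_sq, l2_sq, l2_sq, ← Finset.sum_add_distrib]
  apply Finset.sum_congr rfl; intro i _
  rcases h i with h0 | h0 <;> simp [h0]

lemma dot_self_eq_l2_sq {m : ℕ} (w : Fin m → ℝ) : w ⬝ᵥ w = l2 w ^ 2 := by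
  rw [l2_sq]; unfold dotProduct; apply Finset.sum_congr rfl; intro i _; ring

lemma sparse_of_card {p : ℕ} {k : ℕ} {x : Fin p → ℝ} {T : Finset (Fin p)}
    (hT : ∀ i, x i ≠ 0 → i ∈ T) (hc : T.card ≤ k) : IsSparse k x := by
  unfold IsSparse
  exact le_trans (Finset.card_le_card fun i hi => hT i (by simpa using hi)) hc

/-- existence of a subset of given cardinality containing the largest values of f -/
lemma exists_top {p : ℕ} (S : Finset (Fin p)) (f : Fin p → ℝ) (k : ℕ) (hk : k ≤ S.card) :
    ∃ T ⊆ S, T.card = k ∧ ∀ i ∈ T, ∀ j ∈ S, j ∉ T → f j ≤ f i := by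
  induction k with
  | zero => exact ⟨∅, Finset.empty_subset _, Finset.card_empty, by simp⟩
  | succ k ih =>
    obtain ⟨T, hTS, hTcard, hTmax⟩ := ih (Nat.le_of_succ_le hk)
    have hne : (S \ T).Nonempty := by
      rw [← Finset.card_pos, Finset.card_sdiff_of_subset hTS, hTcard]; omega
    obtain ⟨i₀, hi₀, hmax⟩ := (S \ T).exists_max_image f hne
    have hi₀S : i₀ ∈ S := (Finset.mem_sdiff.mp hi₀).1
    have hi₀T : i₀ ∉ T := (Finset.mem_sdiff.mp hi₀).2
    refine ⟨insert i₀ T, ?_, ?_, ?_⟩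
    · exact Finset.insert_subset hi₀S hTS
    · rw [Finset.card_insert_of_notMem hi₀T, hTcard]
    · intro i hi j hjS hj
      have hjT : j ∉ T := fun hjT => hj (Finset.mem_insert_of_mem hjT)
      rcases Finset.mem_insert.mp hi with rfl | hiT
      · exact hmax j (Finset.mem_sdiff.mpr ⟨hjS, hjT⟩)
      · exact hTmax i hiT j hjS hjT

lemma l2_le_sqrt_mul {p : ℕ} {M : ℕ} {y : Fin p → ℝ} {α : ℝ} (hα : 0 ≤ α)
    (hcard : (univ.filter fun i => y i ≠ 0).card ≤ M) (hb : ∀ i, |y i| ≤ α) :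
    l2 y ≤ Real.sqrt M * α := by
  have h1 : ∑ i, y i ^ 2 ≤ (M : ℝ) * α ^ 2 := by
    rw [← Finset.sum_filter_of_ne (s := univ) (p := fun i => y i ≠ 0)
      (f := fun i => y i ^ 2) (fun i _ h => by intro h0; exact h (by simpa [h0] using h))]
    calc ∑ i ∈ univ.filter fun i => y i ≠ 0, y i ^ 2
        ≤ ∑ _i ∈ univ.filter fun i => y i ≠ 0, α ^ 2 := by
          apply Finset.sum_le_sum; intro i _
          calc y i ^ 2 = |y i| ^ 2 := (sq_abs _).symm
          _ ≤ α ^ 2 := pow_le_pow_left₀ (abs_nonneg _) (hb i) 2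
      _ = (univ.filter fun i => y i ≠ 0).card * α ^ 2 := by rw [Finset.sum_const, nsmul_eq_mul]
      _ ≤ (M : ℝ) * α ^ 2 := by
          apply mul_le_mul_of_nonneg_right _ (sq_nonneg α)
          exact_mod_cast hcard
  calc l2 y = Real.sqrt (∑ i, y i ^ 2) := rfl
  _ ≤ Real.sqrt ((M : ℝ) * α ^ 2) := Real.sqrt_le_sqrt h1
  _ = Real.sqrt M * α := by rw [Real.sqrt_mul (Nat.cast_nonneg M), Real.sqrt_sq hα]

/-- decomposition of a vector into M-sparse pieces with controlled total l2 norm -/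
lemma decomp {p : ℕ} (M : ℕ) (hM : 0 < M) :
    ∀ (N : ℕ) (y : Fin p → ℝ) (α : ℝ), 0 ≤ α →
      (univ.filter fun i => y i ≠ 0).card ≤ N → (∀ i, |y i| ≤ α) →
      ∃ l : List (Fin p → ℝ), y = l.sum ∧
        (∀ x ∈ l, IsSparse M x ∧ ∀ i, x i ≠ 0 → y i ≠ 0) ∧
        (l.map l2).sum ≤ Real.sqrt M * α + l1 y / Real.sqrt M := by
  intro N
  induction N with
  | zero =>
    intro y α hα hcard hb
    refine ⟨[y], by simp, by
      intro x hx; rw [List.mem_singleton] at hx; subst hx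
      exact ⟨le_trans hcard (Nat.zero_le M), fun i h => h⟩, ?_⟩
    simp only [List.map_cons, List.map_nil, List.sum_cons, List.sum_nil, add_zero]
    have := l2_le_sqrt_mul hα (le_trans hcard (Nat.zero_le M)) hb
    have h2 : 0 ≤ l1 y / Real.sqrt M := div_nonneg (l1_nonneg y) (Real.sqrt_nonneg _)
    linarith
  | succ N ih =>
    intro y α hα hcard hb
    by_cases hcase : (univ.filter fun i => y i ≠ 0).card ≤ M
    · refine ⟨[y], by simp, by
        intro x hx; rw [List.mem_singleton] at hx; subst hx
        exact ⟨hcase, fun i h => h⟩, ?_⟩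
      simp only [List.map_cons, List.map_nil, List.sum_cons, List.sum_nil, add_zero]
      have := l2_le_sqrt_mul hα hcase hb
      have h2 : 0 ≤ l1 y / Real.sqrt M := div_nonneg (l1_nonneg y) (Real.sqrt_nonneg _)
      linarith
    · push_neg at hcase
      -- pick the top M entries of the support of y
      obtain ⟨T, hTS, hTcard, hTmax⟩ := exists_top (univ.filter fun i => y i ≠ 0)
        (fun i => |y i|) M (le_of_lt hcase)
      set x₀ : Fin p → ℝ := rst T y with hx₀
      set y' : Fin p → ℝ := fun i => if i ∈ T then 0 else y i with hy'
      have hsplit : y = x₀ + y' := by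
        funext i; by_cases hi : i ∈ T <;> simp [hx₀, hy', rst, hi]
      set m := ∑ i ∈ T, |y i| with hm
      have hm0 : 0 ≤ m := Finset.sum_nonneg fun i _ => abs_nonneg _
      set α' : ℝ := m / M with hα'
      have hα'0 : 0 ≤ α' := div_nonneg hm0 (Nat.cast_nonneg M)
      have hb' : ∀ i, |y' i| ≤ α' := by
        intro i
        by_cases hi : i ∈ T
        · simp [hy', hi, hα'0]
        · simp only [hy', hi, if_false]
          by_cases h0 : y i = 0
          · simp [h0, hα'0]
          · have hiS : i ∈ univ.filter fun i => y i ≠ 0 := by simp [h0]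
            have hle : ∀ j ∈ T, |y i| ≤ |y j| := fun j hj => hTmax j hj i hiS hi
            have hsum : (M : ℝ) * |y i| ≤ m := by
              have := Finset.sum_le_sum hle
              rw [Finset.sum_const, hTcard, nsmul_eq_mul] at this
              exact this
            rw [hα', le_div_iff₀ (by exact_mod_cast hM)]
            linarith
      have hcard' : (univ.filter fun i => y' i ≠ 0).card ≤ N := by
        have hsub : (univ.filter fun i => y' i ≠ 0) ⊆ (univ.filter fun i => y i ≠ 0) \ T := by
          intro i hi
          simp only [Finset.mem_filter, Finset.mem_univ, true_and] at hi
          by_cases hiT : i ∈ T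
          · exact absurd (by simp [hy', hiT]) hi
          · simp only [Finset.mem_sdiff, Finset.mem_filter, Finset.mem_univ, true_and]
            exact ⟨by simpa [hy', hiT] using hi, hiT⟩
        calc (univ.filter fun i => y' i ≠ 0).card
            ≤ ((univ.filter fun i => y i ≠ 0) \ T).card := Finset.card_le_card hsub
          _ = (univ.filter fun i => y i ≠ 0).card - M := by rw [Finset.card_sdiff_of_subset hTS, hTcard]
          _ ≤ N := by omega
      obtain ⟨l', hsum', hmem', hbound'⟩ := ih y' α' hα'0 hcard' hb'
      refine ⟨x₀ :: l', ?_, ?_, ?_⟩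
      · rw [List.sum_cons, ← hsum', hsplit]
      · intro x hx
        rcases List.mem_cons.mp hx with rfl | hx
        · refine ⟨sparse_of_card (fun i hi => rst_supp T y i hi) (le_of_eq hTcard), ?_⟩
          intro i hi
          have := rst_supp T y i hi
          simpa [hx₀, rst, this] using hi
        · obtain ⟨hsp, hsupp⟩ := hmem' x hx
          refine ⟨hsp, fun i hi => ?_⟩
          have := hsupp i hi
          by_cases hiT : i ∈ T
          · exact absurd (by simp [hy', hiT]) this
          · simpa [hy', hiT] using this
      · -- norm bound
        have hsM : (0:ℝ) < Real.sqrt M := Real.sqrt_pos.mpr (by exact_mod_cast hM)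
        have hsM2 : Real.sqrt M ^ 2 = (M:ℝ) := Real.sq_sqrt (Nat.cast_nonneg M)
        have hl2x₀ : l2 x₀ ≤ Real.sqrt M * α := by
          apply l2_le_sqrt_mul hα
          · refine le_trans (Finset.card_le_card ?_) (le_of_eq hTcard)
            intro i hi
            simp only [Finset.mem_filter, Finset.mem_univ, true_and] at hi
            exact rst_supp T y i hi
          · intro i
            by_cases hi : i ∈ T
            · simpa [hx₀, rst, hi] using hb i
            · simp [hx₀, rst, hi, hα]
        have hl1y' : l1 y' = l1 y - m := by
          unfold l1
          have : ∀ i, |y' i| = |y i| - (if i ∈ T then |y i| else 0) := by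
            intro i; by_cases hi : i ∈ T <;> simp [hy', hi]
          rw [Finset.sum_congr rfl fun i _ => this i, Finset.sum_sub_distrib,
            Finset.sum_ite_mem, Finset.univ_inter, hm]
        calc ((x₀ :: l').map l2).sum = l2 x₀ + (l'.map l2).sum := by simp
          _ ≤ Real.sqrt M * α + (Real.sqrt M * α' + l1 y' / Real.sqrt M) := by linarith
          _ = Real.sqrt M * α + l1 y / Real.sqrt M := by
              rw [hl1y']
              have hWα' : Real.sqrt M * α' = m / Real.sqrt M := by
                rw [hα', eq_div_iff (ne_of_gt hsM)]
                field_simp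
                nlinarith [hsM2]
              rw [hWα', sub_div]
              ring

lemma sparse_pair {p : ℕ} {k : ℕ} (u v : Fin p → ℝ) (a b : ℝ)
    (hcard : (univ.filter fun i => u i ≠ 0).card + (univ.filter fun i => v i ≠ 0).card ≤ k) :
    IsSparse k (a • u + b • v) := by
  apply sparse_of_card (T := (univ.filter fun i => u i ≠ 0) ∪ (univ.filter fun i => v i ≠ 0))
  · intro i hi
    simp only [Finset.mem_union, Finset.mem_filter, Finset.mem_univ, true_and]
    by_contra hc
    push_neg at hc
    simp [hc.1, hc.2, Pi.add_apply, Pi.smul_apply, smul_eq_mul] at hi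
  · exact le_trans (Finset.card_union_le _ _) hcard

lemma cross_raw {n p k : ℕ} (A : Matrix (Fin n) (Fin p) ℝ) (δ : ℝ)
    (hRIP : ∀ x : Fin p → ℝ, IsSparse k x →
      (1 - δ) * l2 x ^ 2 ≤ l2 (A.mulVec x) ^ 2 ∧ l2 (A.mulVec x) ^ 2 ≤ (1 + δ) * l2 x ^ 2)
    (u v : Fin p → ℝ) (hdisj : ∀ i, u i = 0 ∨ v i = 0)
    (hcard : (univ.filter fun i => u i ≠ 0).card + (univ.filter fun i => v i ≠ 0).card ≤ k) :
    |A.mulVec u ⬝ᵥ A.mulVec v| ≤ δ / 2 * (l2 u ^ 2 + l2 v ^ 2) := by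
  have hsp1 : IsSparse k (u + v) := by
    have := sparse_pair u v 1 1 (k := k) hcard; simpa using this
  have hsp2 : IsSparse k (u - v) := by
    have := sparse_pair u v 1 (-1) (k := k) hcard
    simpa [sub_eq_add_neg, neg_one_smul] using this
  have e1 : l2 (u + v) ^ 2 = l2 u ^ 2 + l2 v ^ 2 := l2_sq_add_disj hdisj
  have e2 : l2 (u - v) ^ 2 = l2 u ^ 2 + l2 v ^ 2 := l2_sq_sub_disj hdisj
  have key : l2 (A.mulVec (u + v)) ^ 2 - l2 (A.mulVec (u - v)) ^ 2
      = 4 * (A.mulVec u ⬝ᵥ A.mulVec v) := by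
    rw [← dot_self_eq_l2_sq, ← dot_self_eq_l2_sq, Matrix.mulVec_add, Matrix.mulVec_sub]
    simp only [dotProduct_add, add_dotProduct, dotProduct_sub,
      sub_dotProduct, dotProduct_comm (A.mulVec v) (A.mulVec u)]
    ring
  have r1 := (hRIP (u + v) hsp1).2
  have r2 := (hRIP (u - v) hsp2).1
  have r3 := (hRIP (u + v) hsp1).1
  have r4 := (hRIP (u - v) hsp2).2
  rw [e1] at r1 r3
  rw [e2] at r2 r4
  rw [abs_le]
  constructor <;> nlinarith [key, r1, r2, r3, r4]

lemma cross {n p k : ℕ} (A : Matrix (Fin n) (Fin p) ℝ) (δ : ℝ) (hδ0 : 0 ≤ δ)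
    (hRIP : ∀ x : Fin p → ℝ, IsSparse k x →
      (1 - δ) * l2 x ^ 2 ≤ l2 (A.mulVec x) ^ 2 ∧ l2 (A.mulVec x) ^ 2 ≤ (1 + δ) * l2 x ^ 2)
    (u v : Fin p → ℝ) (hdisj : ∀ i, u i = 0 ∨ v i = 0)
    (hcard : (univ.filter fun i => u i ≠ 0).card + (univ.filter fun i => v i ≠ 0).card ≤ k) :
    |A.mulVec u ⬝ᵥ A.mulVec v| ≤ δ * l2 u * l2 v := by
  rcases eq_or_lt_of_le (l2_nonneg u) with hU | hU
  · have : u = 0 := l2_eq_zero hU.symm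
    subst this
    simp [Matrix.mulVec_zero, zero_dotProduct, ← hU]
  rcases eq_or_lt_of_le (l2_nonneg v) with hV | hV
  · have : v = 0 := l2_eq_zero hV.symm
    subst this
    simp [Matrix.mulVec_zero, dotProduct_zero, ← hV]
  set t : ℝ := Real.sqrt (l2 v / l2 u) with hts
  have ht : 0 < t := Real.sqrt_pos.mpr (div_pos hV hU)
  have ht2 : t ^ 2 = l2 v / l2 u := Real.sq_sqrt (le_of_lt (div_pos hV hU))
  set u' := t • u with hu'
  set v' := t⁻¹ • v with hv'
  have hdisj' : ∀ i, u' i = 0 ∨ v' i = 0 := by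
    intro i
    rcases hdisj i with h0 | h0 <;> [left; right] <;>
      simp [hu', hv', Pi.smul_apply, smul_eq_mul, h0]
  have hcard' : (univ.filter fun i => u' i ≠ 0).card + (univ.filter fun i => v' i ≠ 0).card ≤ k := by
    refine le_trans (Nat.add_le_add (Finset.card_le_card ?_) (Finset.card_le_card ?_)) hcard <;>
      · intro i hi
        simp only [Finset.mem_filter, Finset.mem_univ, true_and, hu', hv',
          Pi.smul_apply, smul_eq_mul] at hi ⊢
        intro h0
        simp [h0] at hi
  have hraw := cross_raw A δ hRIP u' v' hdisj' hcard'
  have hl2u' : l2 u' = t * l2 u := l2_smul t (le_of_lt ht) u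
  have hl2v' : l2 v' = t⁻¹ * l2 v := l2_smul t⁻¹ (le_of_lt (inv_pos.mpr ht)) v
  have hdot : A.mulVec u' ⬝ᵥ A.mulVec v' = A.mulVec u ⬝ᵥ A.mulVec v := by
    rw [hu', hv', Matrix.mulVec_smul, Matrix.mulVec_smul, smul_dotProduct,
      dotProduct_smul, smul_eq_mul, smul_eq_mul, ← mul_assoc,
      mul_inv_cancel₀ (ne_of_gt ht), one_mul]
  rw [hdot, hl2u', hl2v'] at hraw
  have e1 : (t * l2 u) ^ 2 = l2 u * l2 v := by
    rw [mul_pow, ht2]; field_simp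
  have e2 : (t⁻¹ * l2 v) ^ 2 = l2 u * l2 v := by
    have hh : (t⁻¹) ^ 2 = l2 u / l2 v := by rw [inv_pow, ht2, inv_div]
    rw [mul_pow, hh]
    field_simp
  rw [e1, e2] at hraw
  calc |A.mulVec u ⬝ᵥ A.mulVec v| ≤ δ / 2 * (l2 u * l2 v + l2 u * l2 v) := hraw
  _ = δ * l2 u * l2 v := by ring

lemma list_sum_apply {p : ℕ} (l : List (Fin p → ℝ)) (i : Fin p) :
    l.sum i = (l.map (fun x => x i)).sum := by
  induction l with
  | nil => simp
  | cons x xs ih => simp [ih]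

lemma mulVec_list_sum {n p : ℕ} (A : Matrix (Fin n) (Fin p) ℝ) (l : List (Fin p → ℝ)) :
    A.mulVec l.sum = (l.map (fun x => A.mulVec x)).sum := by
  induction l with
  | nil => simp [Matrix.mulVec_zero]
  | cons x xs ih => simp [Matrix.mulVec_add, ih]

lemma dot_list_sum {m : ℕ} (w : Fin m → ℝ) (l : List (Fin m → ℝ)) :
    w ⬝ᵥ l.sum = (l.map (fun z => w ⬝ᵥ z)).sum := by
  induction l with
  | nil => simp [dotProduct_zero]
  | cons x xs ih => simp [dotProduct_add, ih]

lemma list_sum_map_mul {α : Type*} (c : ℝ) (f : α → ℝ) (l : List α) :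
    (l.map (fun z => c * f z)).sum = c * (l.map f).sum := by
  induction l with
  | nil => simp
  | cons x xs ih => simp [ih]; ring

end StmtAux

open StmtAux Matrix

set_option maxHeartbeats 2000000 in
theorem stmt12 {n p : ℕ} (s : ℕ) (hs : 1 ≤ s) (A : Matrix (Fin n) (Fin p) ℝ)
    (δ : ℝ) (hδ0 : 0 ≤ δ) (hδ : δ < 1 / 3)
    (hRIP : ∀ x : Fin p → ℝ, IsSparse (4 * s) x →
      (1 - δ) * l2 x ^ 2 ≤ l2 (A.mulVec x) ^ 2 ∧ l2 (A.mulVec x) ^ 2 ≤ (1 + δ) * l2 x ^ 2)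
    (h : Fin p → ℝ) (ε σ : ℝ) (hε : 0 ≤ ε) (hσ : 0 ≤ σ)
    (T0 : Finset (Fin p)) (hT0card : T0.card = s)
    (hT0 : ∀ i ∈ T0, ∀ j ∉ T0, |h j| ≤ |h i|)
    (hAh : l2 (A.mulVec h) ≤ 2 * ε)
    (hcone : ∑ j ∈ T0ᶜ, |h j| ≤ ∑ j ∈ T0, |h j| + 2 * σ) :
    l2 h ≤ 12.6 * ε + 3 * σ / Real.sqrt s := by
  classical
  have hsge : (1:ℝ) ≤ (s:ℝ) := by exact_mod_cast hs
  have hspos : (0:ℝ) < (s:ℝ) := by linarith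
  set r := Real.sqrt s with hr
  have hr1 : 1 ≤ r := by
    rw [hr, show (1:ℝ) = Real.sqrt 1 by simp]
    exact Real.sqrt_le_sqrt hsge
  have hr0 : 0 < r := lt_of_lt_of_le one_pos hr1
  have hr2 : r ^ 2 = (s:ℝ) := Real.sq_sqrt (le_of_lt hspos)
  set σ' := σ / r with hσ'
  have hσ'0 : 0 ≤ σ' := div_nonneg hσ (le_of_lt hr0)
  have hσrel : σ = σ' * r := by rw [hσ']; field_simp
  have hgoal : 12.6 * ε + 3 * σ / r = 12.6 * ε + 3 * σ' := by rw [hσ']; ring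
  rw [hgoal]
  clear_value σ'
  clear_value r
  set s2 := Real.sqrt 2 with hs2
  set s3 := Real.sqrt 3 with hs3
  have hs2sq : s2 ^ 2 = 2 := Real.sq_sqrt (by norm_num)
  have hs3sq : s3 ^ 2 = 3 := Real.sq_sqrt (by norm_num)
  have hs2pos : 0 < s2 := Real.sqrt_pos.mpr (by norm_num)
  have hs3pos : 0 < s3 := Real.sqrt_pos.mpr (by norm_num)
  clear_value s2 s3
  by_cases hbig : T0ᶜ.card ≤ 2 * s
  · -- h itself is 4s-sparse
    have hsp : IsSparse (4 * s) h := by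
      apply sparse_of_card (T := univ) (fun i _ => mem_univ i)
      have h1 : (univ : Finset (Fin p)).card = Fintype.card (Fin p) := Finset.card_univ
      have h2 : T0.card + T0ᶜ.card = Fintype.card (Fin p) := Finset.card_add_card_compl T0
      omega
    have hrip := (hRIP h hsp).1
    have h4 : l2 (A.mulVec h) ^ 2 ≤ (2 * ε) ^ 2 := pow_le_pow_left₀ (l2_nonneg _) hAh 2
    have hl2h : l2 h ≤ 2.5 * ε := by
      apply aux_le_of_sq (by linarith only [hε])
      have p1 : 0 ≤ (1/3 - δ) * l2 h ^ 2 :=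
        mul_nonneg (by linarith only [hδ]) (sq_nonneg (l2 h))
      have p2 : 0 ≤ ε ^ 2 := sq_nonneg ε
      linarith only [hrip, h4, p1, p2]
    have p3 : 0 ≤ 3 * σ' := by linarith only [hσ'0]
    linarith only [hl2h, hε, p3]
  · push_neg at hbig
    obtain ⟨T1, hT1S, hT1card, hT1max⟩ :=
      exists_top T0ᶜ (fun j => |h j|) (2 * s) (le_of_lt hbig)
    set T01 := T0 ∪ T1 with hT01
    have hdisjT : Disjoint T0 T1 := by
      rw [Finset.disjoint_left]
      intro i hi hi1
      exact (Finset.mem_compl.mp (hT1S hi1)) hi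
    have hT01card : T01.card = 3 * s := by
      rw [hT01, Finset.card_union_of_disjoint hdisjT, hT0card, hT1card]; ring
    set h0 := rst T0 h with hh0
    set h1 := rst T1 h with hh1
    set g := rst T01 h with hg
    set y := rst T01ᶜ h with hy
    have hgsplit : h = g + y := by
      funext i
      by_cases hi : i ∈ T01 <;> simp [hg, hy, rst, hi]
    have hg01 : g = h0 + h1 := by
      funext i
      by_cases hi0 : i ∈ T0
      · have hi1 : i ∉ T1 := Finset.disjoint_left.mp hdisjT hi0
        simp [hg, hh0, hh1, rst, hT01, hi0, hi1]
      · by_cases hi1 : i ∈ T1 <;> simp [hg, hh0, hh1, rst, hT01, hi0, hi1]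
    set a := l2 h0 with ha
    set c := l2 h1 with hc
    set b := l2 g with hb
    set t := l2 y with htd
    have ha0 : 0 ≤ a := l2_nonneg _
    have hc0 : 0 ≤ c := l2_nonneg _
    have hb0 : 0 ≤ b := l2_nonneg _
    have ht0 : 0 ≤ t := l2_nonneg _
    have hdisj01 : ∀ i, h0 i = 0 ∨ h1 i = 0 := by
      intro i
      by_cases hi0 : i ∈ T0
      · right; exact (by simp [hh1, rst, Finset.disjoint_left.mp hdisjT hi0])
      · left; simp [hh0, rst, hi0]
    have hb2 : b ^ 2 = a ^ 2 + c ^ 2 := by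
      rw [hb, hg01]; exact l2_sq_add_disj hdisj01
    have hab : a ≤ b := aux_le_of_sq hb0 (by linarith only [hb2, sq_nonneg c])
    set L := ∑ j ∈ T0ᶜ, |h j| with hL
    set m := ∑ i ∈ T1, |h i| with hm
    have hL0 : 0 ≤ L := Finset.sum_nonneg fun i _ => abs_nonneg _
    have hm0 : 0 ≤ m := Finset.sum_nonneg fun i _ => abs_nonneg _
    have hT0l1 : ∑ i ∈ T0, |h i| ≤ r * a := by
      apply aux_le_of_sq (mul_nonneg (le_of_lt hr0) ha0)
      have h1' : (∑ i ∈ T0, |h i|) ^ 2 ≤ (T0.card : ℝ) * ∑ i ∈ T0, |h i| ^ 2 := by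
        exact_mod_cast sq_sum_le_card_mul_sum_sq (s := T0) (f := fun i => |h i|)
      have h2' : ∑ i ∈ T0, |h i| ^ 2 = a ^ 2 := by
        rw [ha, l2_sq, hh0, sum_sq_rst]
        exact Finset.sum_congr rfl fun i _ => sq_abs _
      rw [mul_pow, hr2]
      rw [h2', hT0card] at h1'
      exact h1'
    have hLle : L ≤ r * a + 2 * σ := le_trans hcone (by linarith only [hT0l1])
    have hmaxout : ∀ j, j ∉ T01 → 2 * (s:ℝ) * |h j| ≤ m := by
      intro j hj
      have hjT0 : j ∉ T0 := fun hj0 => hj (Finset.mem_union_left _ hj0)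
      have hjT1 : j ∉ T1 := fun hj1 => hj (Finset.mem_union_right _ hj1)
      have hjc : j ∈ T0ᶜ := Finset.mem_compl.mpr hjT0
      have hle : ∀ i ∈ T1, |h j| ≤ |h i| := fun i hi => hT1max i hi j hjc hjT1
      have := Finset.sum_le_sum hle
      rw [Finset.sum_const, hT1card, nsmul_eq_mul] at this
      calc 2 * (s:ℝ) * |h j| = ((2 * s : ℕ) : ℝ) * |h j| := by push_cast; ring
        _ ≤ m := this
    have hT1sub : T1 ⊆ T01 := Finset.subset_union_right
    have hLsplit : L = m + l1 y := by
      have hset : T0ᶜ = T1 ∪ T01ᶜ := by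
        ext j
        simp only [hT01, Finset.mem_compl, Finset.mem_union, not_or]
        constructor
        · intro hj
          by_cases hj1 : j ∈ T1
          · exact Or.inl hj1
          · exact Or.inr ⟨hj, hj1⟩
        · rintro (hj | ⟨hj0, -⟩)
          · exact Finset.mem_compl.mp (hT1S hj)
          · exact hj0
      have hdisj2 : Disjoint T1 T01ᶜ := by
        rw [Finset.disjoint_left]
        intro i hi hic
        exact (Finset.mem_compl.mp hic) (hT1sub hi)
      rw [hL, hset, Finset.sum_union hdisj2, hy, l1_rst]
    have hl1y0 : 0 ≤ l1 y := l1_nonneg y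
    clear_value a c b t L m
    -- decomposition of y
    set α : ℝ := m / (2 * (s:ℝ)) with hα
    have hα0 : 0 ≤ α := div_nonneg hm0 (by linarith)
    have hyb : ∀ i, |y i| ≤ α := by
      intro i
      by_cases hi : i ∈ T01
      · have : y i = 0 := by simp [hy, rst, hi]
        simp [this, hα0]
      · have hyi : y i = h i := by simp [hy, rst, hi]
        rw [hyi, hα, le_div_iff₀ (by linarith only [hspos] : (0:ℝ) < 2 * (s:ℝ))]
        linarith only [hmaxout i hi]
    obtain ⟨l, hysum, hlmem, hlbound⟩ :=
      decomp (2 * s) (by omega) ((univ.filter fun i => y i ≠ 0).card) y α hα0 le_rfl hyb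
    clear_value α
    set Sg := (l.map l2).sum with hSgd
    have hSg0 : 0 ≤ Sg := by
      apply List.sum_nonneg
      intro z hz
      obtain ⟨w, _, rfl⟩ := List.mem_map.mp hz
      exact l2_nonneg w
    clear_value Sg
    -- bound on Sg
    set W := Real.sqrt ((2 * s : ℕ) : ℝ) with hW
    have hWr : W = s2 * r := by
      rw [hW, show ((2 * s : ℕ) : ℝ) = 2 * (s:ℝ) by push_cast; ring,
        Real.sqrt_mul (by norm_num), hs2, hr]
    have hWpos : 0 < W := by rw [hWr]; exact mul_pos hs2pos hr0
    have hW2 : W ^ 2 = 2 * (s:ℝ) := by rw [hWr, mul_pow, hs2sq, hr2]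
    clear_value W
    have hSgle : s2 * r * Sg ≤ L := by
      have h1' : W * Sg ≤ W * (W * α + l1 y / W) :=
        mul_le_mul_of_nonneg_left hlbound (le_of_lt hWpos)
      have h2' : W * (W * α + l1 y / W) = W ^ 2 * α + l1 y := by
        field_simp
      have h3' : W ^ 2 * α = m := by
        rw [hW2, hα]; field_simp
      rw [h2', h3'] at h1'
      rw [← hWr]
      linarith only [hLsplit, h1']
    have hSgle2 : s2 * Sg ≤ b + 2 * σ' := by
      have h1' : s2 * r * Sg ≤ r * (b + 2 * σ') := by
        have : r * a ≤ r * b := mul_le_mul_of_nonneg_left hab (le_of_lt hr0)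
        calc s2 * r * Sg ≤ L := hSgle
          _ ≤ r * a + 2 * σ := hLle
          _ = r * a + 2 * σ' * r := by rw [hσrel]; ring
          _ ≤ r * (b + 2 * σ') := by linarith only [this]
      have h2' : r * (s2 * Sg) ≤ r * (b + 2 * σ') := by linarith only [h1']
      exact le_of_mul_le_mul_left h2' hr0
    -- tail bound
    have htail : 8 * t ^ 2 ≤ (b + 2 * σ') ^ 2 := by
      have htsq : t ^ 2 = ∑ i ∈ T01ᶜ, h i ^ 2 := by
        rw [htd, l2_sq, hy, sum_sq_rst]
      have hptw : ∀ i ∈ T01ᶜ, h i ^ 2 ≤ α * |h i| := by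
        intro i hi
        have hyi : y i = h i := by simp [hy, rst, hi]
        have h1' : |h i| ≤ α := by rw [← hyi]; exact hyb i
        calc h i ^ 2 = |h i| * |h i| := by rw [← sq_abs]; ring
          _ ≤ α * |h i| := mul_le_mul_of_nonneg_right h1' (abs_nonneg _)
      have hsum1 : t ^ 2 ≤ α * (L - m) := by
        rw [htsq]
        calc ∑ i ∈ T01ᶜ, h i ^ 2 ≤ ∑ i ∈ T01ᶜ, α * |h i| := Finset.sum_le_sum hptw
          _ = α * ∑ i ∈ T01ᶜ, |h i| := by rw [Finset.mul_sum]
          _ = α * l1 y := by rw [hy, l1_rst]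
          _ = α * (L - m) := by rw [hLsplit]; ring
      have hA1 : 8 * (s:ℝ) * t ^ 2 ≤ 4 * (m * (L - m)) := by
        have he : 8 * (s:ℝ) * (α * (L - m)) = 4 * (m * (L - m)) := by
          rw [hα]; field_simp; ring
        have h8s : (0:ℝ) ≤ 8 * (s:ℝ) := by linarith only [hspos]
        have := mul_le_mul_of_nonneg_left hsum1 h8s
        linarith only [this, he]
      have hA2 : 4 * (m * (L - m)) ≤ L ^ 2 := by linarith only [sq_nonneg (L - 2 * m)]
      have hA3 : L ^ 2 ≤ (s:ℝ) * (b + 2 * σ') ^ 2 := by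
        have hLr : L ≤ r * (b + 2 * σ') := by
          have : r * a ≤ r * b := mul_le_mul_of_nonneg_left hab (le_of_lt hr0)
          calc L ≤ r * a + 2 * σ := hLle
            _ = r * a + 2 * σ' * r := by rw [hσrel]; ring
            _ ≤ r * (b + 2 * σ') := by linarith only [this]
        calc L ^ 2 ≤ (r * (b + 2 * σ')) ^ 2 := pow_le_pow_left₀ hL0 hLr 2
          _ = (s:ℝ) * (b + 2 * σ') ^ 2 := by rw [mul_pow, hr2]
      have h4' : (s:ℝ) * (8 * t ^ 2) ≤ (s:ℝ) * (b + 2 * σ') ^ 2 := by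
        linarith only [hA1, hA2, hA3]
      exact le_of_mul_le_mul_left h4' hspos
    -- RIP part
    have hg4 : IsSparse (4 * s) g := by
      apply sparse_of_card (T := T01) (fun i hi => rst_supp T01 h i hi)
      omega
    have hq2 : Real.sqrt (1 + δ) ^ 2 = 1 + δ := Real.sq_sqrt (by linarith only [hδ0])
    set q := Real.sqrt (1 + δ) with hqd
    have hq0 : 0 ≤ q := Real.sqrt_nonneg _
    clear_value q
    have hAy : A.mulVec y = (l.map (fun x => A.mulVec x)).sum := by
      rw [hysum]; exact mulVec_list_sum A l
    have hdotg : l2 (A.mulVec g) ^ 2 = (A.mulVec g) ⬝ᵥ (A.mulVec h)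
        - (l.map (fun z => (A.mulVec g) ⬝ᵥ (A.mulVec z))).sum := by
      rw [← dot_self_eq_l2_sq]
      have hAh' : A.mulVec h = A.mulVec g + A.mulVec y := by
        rw [hgsplit, Matrix.mulVec_add]
      rw [hAh', dotProduct_add, hAy, dot_list_sum, List.map_map]
      have hcomp : ((fun z => A *ᵥ g ⬝ᵥ z) ∘ fun x => A *ᵥ x)
          = fun z => A *ᵥ g ⬝ᵥ A *ᵥ z := rfl
      rw [hcomp]
      ring
    have hCS : (A.mulVec g) ⬝ᵥ (A.mulVec h) ≤ q * b * (2 * ε) := by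
      have h1' : l2 (A.mulVec g) ≤ q * b := by
        apply aux_le_of_sq (mul_nonneg hq0 hb0)
        rw [mul_pow, hq2, hb]
        exact (hRIP g hg4).2
      calc (A.mulVec g) ⬝ᵥ (A.mulVec h) ≤ l2 (A.mulVec g) * l2 (A.mulVec h) := dot_le_l2 _ _
        _ ≤ (q * b) * (2 * ε) :=
          mul_le_mul h1' hAh (l2_nonneg _) (mul_nonneg hq0 hb0)
    have hcross : ∀ z ∈ l, -(δ * (a + c) * l2 z) ≤ (A.mulVec g) ⬝ᵥ (A.mulVec z) := by
      intro z hz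
      obtain ⟨hzsp, hzsupp⟩ := hlmem z hz
      have hzT : ∀ i, z i ≠ 0 → i ∉ T01 := by
        intro i hi
        exact Finset.mem_compl.mp (rst_supp T01ᶜ h i (hzsupp i hi))
      have hd0 : ∀ i, h0 i = 0 ∨ z i = 0 := by
        intro i
        by_cases hz0 : z i = 0
        · exact Or.inr hz0
        · have hiT0 : i ∉ T0 := fun hi0 =>
            hzT i hz0 (by rw [hT01]; exact Finset.mem_union_left _ hi0)
          exact Or.inl (by simp [hh0, rst, hiT0])
      have hd1 : ∀ i, h1 i = 0 ∨ z i = 0 := by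
        intro i
        by_cases hz0 : z i = 0
        · exact Or.inr hz0
        · have hiT1 : i ∉ T1 := fun hi1 =>
            hzT i hz0 (by rw [hT01]; exact Finset.mem_union_right _ hi1)
          exact Or.inl (by simp [hh1, rst, hiT1])
      have hcard0 : (univ.filter fun i => h0 i ≠ 0).card ≤ s := by
        refine le_trans (Finset.card_le_card ?_) (le_of_eq hT0card)
        intro i hi
        simp only [Finset.mem_filter, Finset.mem_univ, true_and] at hi
        exact rst_supp T0 h i hi
      have hcard1 : (univ.filter fun i => h1 i ≠ 0).card ≤ 2 * s := by
        refine le_trans (Finset.card_le_card ?_) (le_of_eq hT1card)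
        intro i hi
        simp only [Finset.mem_filter, Finset.mem_univ, true_and] at hi
        exact rst_supp T1 h i hi
      have hb0' := cross A δ hδ0 hRIP h0 z hd0 (by
        have := hzsp; unfold IsSparse at this; omega)
      have hb1' := cross A δ hδ0 hRIP h1 z hd1 (by
        have := hzsp; unfold IsSparse at this; omega)
      have he : (A.mulVec g) ⬝ᵥ (A.mulVec z)
          = (A.mulVec h0) ⬝ᵥ (A.mulVec z) + (A.mulVec h1) ⬝ᵥ (A.mulVec z) := by
        rw [hg01, Matrix.mulVec_add, add_dotProduct]
      rw [he]
      have n0 := neg_abs_le ((A.mulVec h0) ⬝ᵥ (A.mulVec z))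
      have n1 := neg_abs_le ((A.mulVec h1) ⬝ᵥ (A.mulVec z))
      have heq : δ * l2 h0 * l2 z + δ * l2 h1 * l2 z = δ * (a + c) * l2 z := by
        rw [ha, hc]; ring
      linarith only [hb0', hb1', n0, n1, heq]
    have hsumcross : -(δ * (a + c) * Sg) ≤ (l.map (fun z => (A.mulVec g) ⬝ᵥ (A.mulVec z))).sum := by
      have h1' : (l.map (fun z => -(δ * (a + c)) * l2 z)).sum
          ≤ (l.map (fun z => (A.mulVec g) ⬝ᵥ (A.mulVec z))).sum := by
        apply List.sum_le_sum
        intro z hz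
        have := hcross z hz
        linarith only [this]
      rw [list_sum_map_mul] at h1'
      calc -(δ * (a + c) * Sg) = -(δ * (a + c)) * (l.map l2).sum := by rw [← hSgd]; ring
        _ ≤ _ := h1'
    have hmain : (1 - δ) * b ^ 2 ≤ q * b * (2 * ε) + δ * (a + c) * Sg := by
      have h1' := (hRIP g hg4).1
      rw [hdotg, ← hb] at h1'
      linarith only [h1', hCS, hsumcross]
    -- numeric bounds
    have hq3 : 3 * q ≤ 2 * s3 := by
      apply aux_le_of_sq (by linarith only [hs3pos])
      rw [mul_pow, mul_pow, hq2, hs3sq]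
      linarith only [hδ]
    have hac : a + c ≤ s2 * b := by
      apply aux_le_of_sq (mul_nonneg (le_of_lt hs2pos) hb0)
      rw [mul_pow, hs2sq]
      linarith only [hb2, sq_nonneg (a - c)]
    have hbb : b ≤ 4 * s3 * ε + 2 * σ' := by
      rcases eq_or_lt_of_le hb0 with hb' | hb'
      · rw [← hb']
        have := mul_nonneg (le_of_lt hs3pos) hε
        linarith only [this, hσ'0]
      · have c1 : δ * (a + c) * Sg ≤ δ * (s2 * b) * Sg :=
          mul_le_mul_of_nonneg_right (mul_le_mul_of_nonneg_left hac hδ0) hSg0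
        have c3 : δ * b * (s2 * Sg) ≤ δ * b * (b + 2 * σ') :=
          mul_le_mul_of_nonneg_left hSgle2 (mul_nonneg hδ0 hb0)
        have p1 : 0 ≤ (1/3 - δ) * b ^ 2 :=
          mul_nonneg (by linarith only [hδ]) (sq_nonneg b)
        have p2 : 0 ≤ (1/3 - δ) * (b * σ') :=
          mul_nonneg (by linarith only [hδ]) (mul_nonneg hb0 hσ'0)
        have c4 : (1/3) * b ^ 2 ≤ 2 * q * ε * b + (2/3) * (b * σ') := by
          linarith only [hmain, c1, c3, p1, p2]
        have c5 : (1/3 * b) * b ≤ (2 * q * ε + 2/3 * σ') * b := by linarith only [c4]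
        have c6 : 1/3 * b ≤ 2 * q * ε + 2/3 * σ' := le_of_mul_le_mul_right c5 hb'
        have c7 : 6 * q * ε ≤ 4 * s3 * ε := by
          have := mul_nonneg (by linarith only [hq3] : (0:ℝ) ≤ 2 * s3 - 3 * q) hε
          linarith only [this]
        linarith only [c6, c7]
    have hfin : 2 * s2 * l2 h ≤ 3 * b + 2 * σ' := by
      have hl2h2 : l2 h ^ 2 = b ^ 2 + t ^ 2 := by
        rw [hgsplit, hb, htd]
        apply l2_sq_add_disj
        intro i
        by_cases hi : i ∈ T01
        · right; simp [hy, rst, hi]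
        · left; simp [hg, rst, hi]
      apply aux_le_of_sq (by linarith only [hb0, hσ'0])
      rw [mul_pow, mul_pow, hs2sq, hl2h2]
      linarith only [htail, mul_nonneg hb0 hσ'0]
    have h1' : 12 * s3 ≤ 25.2 * s2 := by
      apply aux_le_of_sq (by linarith only [hs2pos])
      rw [mul_pow, mul_pow, hs2sq, hs3sq]
      norm_num
    have h2' : (8:ℝ) ≤ 6 * s2 := by
      apply aux_le_of_sq (by linarith only [hs2pos])
      rw [mul_pow, hs2sq]
      norm_num
    have h3' : 2 * s2 * l2 h ≤ 2 * s2 * (12.6 * ε + 3 * σ') := by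
      have e1 : 2 * s2 * l2 h ≤ 12 * s3 * ε + 8 * σ' := by linarith only [hfin, hbb]
      have q1 : 0 ≤ (25.2 * s2 - 12 * s3) * ε :=
        mul_nonneg (by linarith only [h1']) hε
      have q2 : 0 ≤ (6 * s2 - 8) * σ' :=
        mul_nonneg (by linarith only [h2']) hσ'0
      linarith only [e1, q1, q2]
    exact le_of_mul_le_mul_left h3' (by linarith only [hs2pos])
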